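/- arXiv:1902.04938 — 2 statements merged into one kernel-verified Lean document; each statement's English description precedes it below -/
import Mathlib

section
/- If K is an m-semiring, then the timeslice map commutes with the monus of the period semiring: for every time point T and all coalesced temporal K-elements k and k', τ_T(k −_T k') = τ_T(k) −_K τ_T(k'). -/
open scoped Classical

namespace TemporalK

variable {K : Type*}

/-- An interval over the time domain `{0, ..., N-1}`: a pair `(b, e)` with `b < e ≤ N`. -/
abbrev TInterval (N : ℕ) := {I : Fin (N + 1) × Fin (N + 1) // I.1 < I.2}

/-- A temporal `K`-element: a function assigning to each interval an element of `K`. -/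
abbrev TempEl (N : ℕ) (K : Type*) := TInterval N → K

/-- The interval `I = (b, e)` contains the time point `T` iff `b ≤ T < e`. -/
def Contains {N : ℕ} (I : TInterval N) (T : ℕ) : Prop :=
  (I.val.1 : ℕ) ≤ T ∧ T < (I.val.2 : ℕ)

/-- The timeslice of `𝒯` at time point `T`: the sum of `𝒯 I` over all intervals `I`
containing `T`. -/
noncomputable def slice {N : ℕ} [CommSemiring K] (𝒯 : TempEl N K) (T : ℕ) : K :=
  ∑ I ∈ Finset.univ.filter (fun I : TInterval N => Contains I T), 𝒯 I

/-- `T` is an (annotation) changepoint of `𝒯` iff `T = 0` or the timeslices at `T - 1`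
and `T` differ. -/
def Changepoint {N : ℕ} [CommSemiring K] (𝒯 : TempEl N K) (T : ℕ) : Prop :=
  T = 0 ∨ slice 𝒯 (T - 1) ≠ slice 𝒯 T

/-- `I = (b, e)` is a changepoint interval of `𝒯` iff `b` is a changepoint, `e` is a
changepoint or equals `N`, and no time point strictly between `b` and `e` is a changepoint. -/
def CPInterval {N : ℕ} [CommSemiring K] (𝒯 : TempEl N K) (I : TInterval N) : Prop :=
  Changepoint 𝒯 (I.val.1 : ℕ) ∧
    (Changepoint 𝒯 (I.val.2 : ℕ) ∨ (I.val.2 : ℕ) = N) ∧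
    ∀ T : ℕ, (I.val.1 : ℕ) < T → T < (I.val.2 : ℕ) → ¬ Changepoint 𝒯 T

/-- `K`-coalescing: maps changepoint intervals `(b, e)` to the timeslice at `b` and all
other intervals to `0`. -/
noncomputable def coal {N : ℕ} [CommSemiring K] (𝒯 : TempEl N K) : TempEl N K :=
  fun I => if CPInterval 𝒯 I then slice 𝒯 (I.val.1 : ℕ) else 0

/-- Snapshot equivalence: equal timeslices at every time point. -/
def SnapEq {N : ℕ} [CommSemiring K] (k k' : TempEl N K) : Prop :=
  ∀ T : ℕ, T < N → slice k T = slice k' T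

/-- A temporal `K`-element is coalesced iff it is the `K`-coalescing of some
temporal `K`-element. -/
def Coalesced {N : ℕ} [CommSemiring K] (k : TempEl N K) : Prop :=
  ∃ 𝒯 : TempEl N K, k = coal 𝒯

/-- Pointwise addition of temporal `K`-elements. -/
def padd {N : ℕ} [CommSemiring K] (k k' : TempEl N K) : TempEl N K :=
  fun I => k I + k' I

/-- Pointwise multiplication of temporal `K`-elements:
`(k ·_P k')(I) = Σ k(I')·k'(I'')` over all pairs `(I', I'')` whose intersection is
nonempty and equals `I`. -/
noncomputable def pmul {N : ℕ} [CommSemiring K] (k k' : TempEl N K) : TempEl N K :=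
  fun I =>
    ∑ p ∈ Finset.univ.filter (fun p : TInterval N × TInterval N =>
        max (p.1.val.1 : ℕ) (p.2.val.1 : ℕ) < min (p.1.val.2 : ℕ) (p.2.val.2 : ℕ) ∧
        (I.val.1 : ℕ) = max (p.1.val.1 : ℕ) (p.2.val.1 : ℕ) ∧
        (I.val.2 : ℕ) = min (p.1.val.2 : ℕ) (p.2.val.2 : ℕ)),
      k p.1 * k' p.2

/-- Addition of the period semiring: coalesced pointwise addition. -/
noncomputable def tadd {N : ℕ} [CommSemiring K] (k k' : TempEl N K) : TempEl N K :=
  coal (padd k k')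

/-- Multiplication of the period semiring: coalesced pointwise multiplication. -/
noncomputable def tmul {N : ℕ} [CommSemiring K] (k k' : TempEl N K) : TempEl N K :=
  coal (pmul k k')

/-- The zero of the period semiring: maps every interval to `0`. -/
def zeroT (N : ℕ) (K : Type*) [CommSemiring K] : TempEl N K := fun _ => 0

/-- The one of the period semiring: maps the interval `(0, N)` to `1` and every other
interval to `0`. -/
def oneT (N : ℕ) (K : Type*) [CommSemiring K] : TempEl N K :=
  fun I => if (I.val.1 : ℕ) = 0 ∧ (I.val.2 : ℕ) = N then 1 else 0

/-- Encoding of an annotation history `f : time points → K` as a coalesced temporal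
`K`-element: coalesce the element assigning `f T` to each singleton interval `(T, T+1)`. -/
noncomputable def enc {N : ℕ} [CommSemiring K] (f : Fin N → K) : TempEl N K :=
  coal (fun I =>
    if h : (I.val.2 : ℕ) = (I.val.1 : ℕ) + 1 then
      f ⟨(I.val.1 : ℕ), by have := I.val.2.isLt; omega⟩
    else 0)

/-- The natural preorder of the semiring `K`. -/
def nle [CommSemiring K] (a b : K) : Prop := ∃ c, a + c = b

/-- The natural preorder of the period semiring (on coalesced temporal `K`-elements). -/
def tle {N : ℕ} [CommSemiring K] (k k' : TempEl N K) : Prop :=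
  ∃ k'' : TempEl N K, Coalesced k'' ∧ tadd k k'' = k'

/-- The pointwise monus: assigns `τ_T(k) −_K τ_T(k')` to each singleton interval
`(T, T+1)` and `0` to every non-singleton interval. -/
noncomputable def pmonus {N : ℕ} [CommSemiring K] (monus : K → K → K)
    (k k' : TempEl N K) : TempEl N K :=
  fun I =>
    if (I.val.2 : ℕ) = (I.val.1 : ℕ) + 1 then
      monus (slice k (I.val.1 : ℕ)) (slice k' (I.val.1 : ℕ))
    else 0

/-- The monus of the period semiring: coalesced pointwise monus. -/
noncomputable def tmonus {N : ℕ} [CommSemiring K] (monus : K → K → K)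
    (k k' : TempEl N K) : TempEl N K :=
  coal (pmonus monus k k')

end TemporalK

open TemporalK

/-- Timeslices are constant between changepoints. -/
lemma slice_const_of_no_cp {N : ℕ} {K : Type*} [CommSemiring K] (𝒯 : TempEl N K)
    {b t : ℕ} (hb : b ≤ t) (h : ∀ s, b < s → s ≤ t → ¬ Changepoint 𝒯 s) :
    slice 𝒯 b = slice 𝒯 t := by
  induction t with
  | zero => rw [Nat.le_zero.mp hb]
  | succ t ih =>
    rcases Nat.lt_or_ge b (t + 1) with hlt | hge
    · have hb' : b ≤ t := by omega
      have h1 : slice 𝒯 b = slice 𝒯 t :=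
        ih hb' (fun s hs1 hs2 => h s hs1 (by omega))
      have h2 : ¬ Changepoint 𝒯 (t + 1) := h (t + 1) (by omega) le_rfl
      unfold Changepoint at h2
      push_neg at h2
      have := h2.2
      simpa using h1.trans (by simpa using this)
    · have : b = t + 1 := le_antisymm hb hge
      subst this; rfl

/-- Coalescing preserves timeslices at all time points `T < N`. -/
lemma slice_coal_eq {N : ℕ} {K : Type*} [CommSemiring K] (𝒯 : TempEl N K)
    (T : ℕ) (hT : T < N) : slice (coal 𝒯) T = slice 𝒯 T := by
  classical
  set b := Nat.findGreatest (Changepoint 𝒯) T with hbdef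
  have hb_cp : Changepoint 𝒯 b :=
    Nat.findGreatest_spec (Nat.zero_le T) (Or.inl rfl)
  have hbT : b ≤ T := Nat.findGreatest_le T
  have hno1 : ∀ s, b < s → s ≤ T → ¬ Changepoint 𝒯 s := fun s hs1 hs2 =>
    Nat.findGreatest_is_greatest hs1 hs2
  have hex : ∃ t, T < t ∧ (Changepoint 𝒯 t ∨ t = N) := ⟨N, hT, Or.inr rfl⟩
  set e := Nat.find hex with hedef
  obtain ⟨hTe, he_cp⟩ : T < e ∧ (Changepoint 𝒯 e ∨ e = N) := Nat.find_spec hex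
  have heN : e ≤ N := Nat.find_min' hex ⟨hT, Or.inr rfl⟩
  have hno2 : ∀ s, T < s → s < e → ¬ Changepoint 𝒯 s := fun s h1 h2 hc =>
    Nat.find_min hex h2 ⟨h1, Or.inl hc⟩
  have hbe : b < e := lt_of_le_of_lt hbT hTe
  have hbN : b < N + 1 := by omega
  have heN1 : e < N + 1 := by omega
  set I₀ : TInterval N := ⟨(⟨b, hbN⟩, ⟨e, heN1⟩), by simpa [Fin.mk_lt_mk] using hbe⟩
    with hI₀
  have hCPI : CPInterval 𝒯 I₀ := by
    refine ⟨by simpa using hb_cp, by simpa using he_cp, ?_⟩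
    intro t ht1 ht2 hc
    simp only [hI₀] at ht1 ht2
    rcases Nat.lt_or_ge T t with h | h
    · exact hno2 t h (by simpa using ht2) hc
    · exact hno1 t (by simpa using ht1) h hc
  have hmem : I₀ ∈ Finset.univ.filter (fun I : TInterval N => Contains I T) := by
    exact Finset.mem_filter.mpr ⟨Finset.mem_univ _, hbT, hTe⟩
  have hcoalI₀ : coal 𝒯 I₀ = slice 𝒯 b := by
    exact if_pos hCPI
  have hzero : ∀ I ∈ Finset.univ.filter (fun I : TInterval N => Contains I T),
      I ≠ I₀ → coal 𝒯 I = 0 := by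
    intro I hImem hne
    rw [Finset.mem_filter] at hImem
    obtain ⟨-, hcont⟩ := hImem
    unfold coal
    split_ifs with hcp
    · exfalso
      obtain ⟨hcp1, hcp2, hcp3⟩ := hcp
      obtain ⟨hc1, hc2⟩ := hcont
      -- I.val.1 = b
      have hle_b : (I.val.1 : ℕ) ≤ b := Nat.le_findGreatest hc1 hcp1
      have heq_b : (I.val.1 : ℕ) = b := by
        by_contra hne'
        exact hcp3 b (by omega) (by omega) hb_cp
      -- e ≤ I.val.2
      have he'N : (I.val.2 : ℕ) ≤ N := by omega
      have hle_e : e ≤ (I.val.2 : ℕ) := Nat.find_min' hex ⟨hc2, hcp2⟩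
      have heq_e : (I.val.2 : ℕ) = e := by
        by_contra hne'
        have helt : e < (I.val.2 : ℕ) := by omega
        have : e < N := by omega
        have hecp : Changepoint 𝒯 e := by
          rcases he_cp with h | h
          · exact h
          · omega
        exact hcp3 e (by omega) helt hecp
      apply hne
      apply Subtype.ext
      apply Prod.ext <;> apply Fin.ext <;> simp [hI₀, heq_b, heq_e]
    · rfl
  calc slice (coal 𝒯) T = coal 𝒯 I₀ := Finset.sum_eq_single_of_mem I₀ hmem hzero
    _ = slice 𝒯 b := hcoalI₀
    _ = slice 𝒯 T := slice_const_of_no_cp 𝒯 hbT hno1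

/-- The timeslice of the pointwise monus. -/
lemma slice_pmonus_eq {N : ℕ} {K : Type*} [CommSemiring K] (monus : K → K → K)
    (k k' : TempEl N K) (T : ℕ) (hT : T < N) :
    slice (pmonus monus k k') T = monus (slice k T) (slice k' T) := by
  classical
  have hTN : T < N + 1 := by omega
  have hT1N : T + 1 < N + 1 := by omega
  set I₀ : TInterval N := ⟨(⟨T, hTN⟩, ⟨T + 1, hT1N⟩), by simp [Fin.mk_lt_mk]⟩ with hI₀
  have hmem : I₀ ∈ Finset.univ.filter (fun I : TInterval N => Contains I T) := by
    exact Finset.mem_filter.mpr ⟨Finset.mem_univ _, le_rfl, Nat.lt_succ_self T⟩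
  have hzero : ∀ I ∈ Finset.univ.filter (fun I : TInterval N => Contains I T),
      I ≠ I₀ → pmonus monus k k' I = 0 := by
    intro I hImem hne
    rw [Finset.mem_filter] at hImem
    obtain ⟨-, hc1, hc2⟩ := hImem
    unfold pmonus
    split_ifs with h
    · exfalso
      apply hne
      have hb : (I.val.1 : ℕ) = T := by omega
      have he : (I.val.2 : ℕ) = T + 1 := by omega
      apply Subtype.ext
      apply Prod.ext <;> apply Fin.ext <;> simp [hI₀, hb, he]
    · rfl
  calc slice (pmonus monus k k') T = pmonus monus k k' I₀ :=
        Finset.sum_eq_single_of_mem I₀ hmem hzero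
    _ = monus (slice k T) (slice k' T) := by simp [pmonus, hI₀]

theorem slice_commutes_with_tmonus {N : ℕ} (hN : 1 ≤ N) {K : Type*} [CommSemiring K]
    (hanti : ∀ a b : K, nle a b → nle b a → a = b)
    (monus : K → K → K)
    (hmem : ∀ a b : K, nle a (b + monus a b))
    (hleast : ∀ a b c : K, nle a (b + c) → nle (monus a b) c)
    (k k' : TempEl N K) (hk : Coalesced k) (hk' : Coalesced k')
    (T : ℕ) (hT : T < N) :
    slice (tmonus monus k k') T = monus (slice k T) (slice k' T) := by
  rw [tmonus, slice_coal_eq _ T hT, slice_pmonus_eq monus k k' T hT]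
end

section
/- Coalescing can be redundantly pushed into either argument of the pointwise monus: if K is an m-semiring, then for all temporal K-elements k and k', coal(k −_P k') = coal(coal(k) −_P k') and coal(k −_P k') = coal(k −_P coal(k')). -/
open scoped Classical

open TemporalK

/-!
The pointwise monus reads its arguments only through their timeslices at time points `T < N`,
and coalescing preserves all of these: `T` lies in exactly one changepoint interval `(b, e)`,
the timeslice of `𝒯` is constant on `[b, e)`, and that interval is the only one containing `T`
to which `coal 𝒯` assigns a nonzero value, namely `τ_b(𝒯) = τ_T(𝒯)`.
-/

namespace TemporalK

variable {K : Type*} [CommSemiring K] {N : ℕ}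

theorem slice_eq_of_forall_not_changepoint {𝒯 : TempEl N K} {b T : ℕ} (hbT : b ≤ T)
    (h : ∀ S, b < S → S ≤ T → ¬ Changepoint 𝒯 S) : slice 𝒯 b = slice 𝒯 T := by
  induction T, hbT using Nat.le_induction with
  | base => rfl
  | succ T hbT ih =>
    have hstep : ¬ Changepoint 𝒯 (T + 1) := h (T + 1) (by omega) le_rfl
    simp only [Changepoint, not_or, not_not, add_tsub_cancel_right] at hstep
    rw [ih fun S h₁ h₂ => h S h₁ (by omega), hstep.2]

theorem CPInterval.slice_fst_eq {𝒯 : TempEl N K} {I : TInterval N} (hI : CPInterval 𝒯 I)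
    {T : ℕ} (hT : Contains I T) : slice 𝒯 I.val.1 = slice 𝒯 T :=
  slice_eq_of_forall_not_changepoint hT.1 fun S h₁ h₂ => hI.2.2 S h₁ (by have := hT.2; omega)

theorem CPInterval.eq_of_contains {𝒯 : TempEl N K} {I J : TInterval N}
    (hI : CPInterval 𝒯 I) (hJ : CPInterval 𝒯 J) {T : ℕ}
    (hIT : Contains I T) (hJT : Contains J T) : I = J := by
  obtain ⟨hIb, hIe, hInot⟩ := hI
  obtain ⟨hJb, hJe, hJnot⟩ := hJ
  obtain ⟨hIT₁, hIT₂⟩ := hIT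
  obtain ⟨hJT₁, hJT₂⟩ := hJT
  have hIN : (I.val.2 : ℕ) ≤ N := Nat.lt_succ_iff.mp I.val.2.isLt
  have hJN : (J.val.2 : ℕ) ≤ N := Nat.lt_succ_iff.mp J.val.2.isLt
  have hb : (I.val.1 : ℕ) = J.val.1 := by
    rcases lt_trichotomy (I.val.1 : ℕ) J.val.1 with h | h | h
    · exact absurd hJb (hInot _ h (by omega))
    · exact h
    · exact absurd hIb (hJnot _ h (by omega))
  have he : (I.val.2 : ℕ) = J.val.2 := by
    rcases lt_trichotomy (I.val.2 : ℕ) J.val.2 with h | h | h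
    · exact absurd (hIe.resolve_right (by omega)) (hJnot _ (by omega) h)
    · exact h
    · exact absurd (hJe.resolve_right (by omega)) (hInot _ (by omega) h)
  exact Subtype.ext (Prod.ext (Fin.ext hb) (Fin.ext he))

/-- The interval from the last changepoint `≤ T` to the first changepoint (or `N`) after `T`. -/
theorem exists_cpInterval_contains (𝒯 : TempEl N K) {T : ℕ} (hT : T < N) :
    ∃ I : TInterval N, CPInterval 𝒯 I ∧ Contains I T := by
  set b := Nat.findGreatest (Changepoint 𝒯) T
  have hbT : b ≤ T := Nat.findGreatest_le T
  have hNext : ∃ S, T < S ∧ (Changepoint 𝒯 S ∨ S = N) := ⟨N, hT, Or.inr rfl⟩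
  set e := Nat.find hNext
  obtain ⟨hTe, he⟩ := Nat.find_spec hNext
  have heN : e ≤ N := Nat.find_min' hNext ⟨hT, Or.inr rfl⟩
  refine ⟨⟨(⟨b, by omega⟩, ⟨e, by omega⟩), Fin.mk_lt_mk.mpr (by omega)⟩,
    ⟨Nat.findGreatest_spec (Nat.zero_le T) (Or.inl rfl), he, fun S h₁ h₂ hS => ?_⟩, hbT, hTe⟩
  rcases le_or_gt S T with hST | hTS
  · exact Nat.findGreatest_is_greatest h₁ hST hS
  · exact Nat.find_min hNext h₂ ⟨hTS, Or.inl hS⟩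

theorem slice_coal (𝒯 : TempEl N K) {T : ℕ} (hT : T < N) : slice (coal 𝒯) T = slice 𝒯 T := by
  obtain ⟨I, hI, hIT⟩ := exists_cpInterval_contains 𝒯 hT
  rw [slice, Finset.sum_eq_single_of_mem I (by simpa using hIT), coal, if_pos hI,
    hI.slice_fst_eq hIT]
  intro J hJT hJI
  have hJT : Contains J T := by simpa using hJT
  exact if_neg fun hJ => hJI (hJ.eq_of_contains hI hJT hIT)

theorem snapEq_coal (𝒯 : TempEl N K) : SnapEq 𝒯 (coal 𝒯) :=
  fun _ hT => (slice_coal 𝒯 hT).symm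

theorem pmonus_congr (monus : K → K → K) {k l k' l' : TempEl N K}
    (hk : SnapEq k l) (hk' : SnapEq k' l') : pmonus monus k k' = pmonus monus l l' := by
  funext I
  unfold pmonus
  split_ifs with hI
  · have hT : (I.val.1 : ℕ) < N := by have := I.val.2.isLt; omega
    rw [hk _ hT, hk' _ hT]
  · rfl

end TemporalK

theorem coal_push_pmonus_general {N : ℕ} {K : Type*} [CommSemiring K]
    (monus : K → K → K)
    (k k' : TempEl N K) :
    coal (pmonus monus k k') = coal (pmonus monus (coal k) k') ∧
    coal (pmonus monus k k') = coal (pmonus monus k (coal k')) :=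
  ⟨congrArg coal (pmonus_congr monus (snapEq_coal k) fun _ _ => rfl),
    congrArg coal (pmonus_congr monus (fun _ _ => rfl) (snapEq_coal k'))⟩

theorem coal_push_pmonus {N : ℕ} (hN : 1 ≤ N) {K : Type*} [CommSemiring K]
    (hanti : ∀ a b : K, nle a b → nle b a → a = b)
    (monus : K → K → K)
    (hmem : ∀ a b : K, nle a (b + monus a b))
    (hleast : ∀ a b c : K, nle a (b + c) → nle (monus a b) c)
    (k k' : TempEl N K) :
    coal (pmonus monus k k') = coal (pmonus monus (coal k) k') ∧
    coal (pmonus monus k k') = coal (pmonus monus k (coal k')) :=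
  coal_push_pmonus_general monus k k'
end
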